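/- arXiv:cs/0003007 — 3 statements merged into one kernel-verified Lean document; each statement's English description precedes it below -/
import Mathlib

section
/- Suppose SS is a set of models of a finite clause set A over P ∪ Q constructed iteratively as follows: each element of SS is a model of A of minimum Σ_{p∈P} X_p-value among interpretations satisfying Tr(A) and all previously added exclusion constraints Σ_{p∈M∩P} X_p + Σ_{q∈M∩Q} X_q + Σ_{q'∈Q∖M}(1−X_{q'}) ≤ |M∩P|+|Q|−1, and the construction terminates when no such model exists. Then SS equals the set of all minimal models of A with respect to P with Q fixed. -/
/-- A clause: disjunction of positive literals `pos` and negative literals `neg`. -/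
structure Clause (σ : Type*) where
  pos : Finset σ
  neg : Finset σ

/-- `I` satisfies the clause `C`. -/
def satClause {σ : Type*} (I : Finset σ) (C : Clause σ) : Prop :=
  (∃ p ∈ C.pos, p ∈ I) ∨ (∃ q ∈ C.neg, q ∉ I)

/-- The 0-1 value `X_r` of symbol `r` in interpretation `I`. -/
def XX {σ : Type*} [DecidableEq σ] (I : Finset σ) (r : σ) : ℤ :=
  if r ∈ I then 1 else 0

/-- The inequality `Tr(C)` translated from clause `C`, evaluated at `I`. -/
def trIneq {σ : Type*} [DecidableEq σ] (I : Finset σ) (C : Clause σ) : Prop :=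
  1 ≤ ∑ p ∈ C.pos, XX I p + ∑ q ∈ C.neg, (1 - XX I q)

/-- The exclusion constraint generated from solution `M`, evaluated at `I`. -/
def exclIneq {σ : Type*} [DecidableEq σ] (P Q : Finset σ) (M I : Finset σ) : Prop :=
  ∑ p ∈ M ∩ P, XX I p + ∑ q ∈ M ∩ Q, XX I q + ∑ q' ∈ Q \ M, (1 - XX I q')
    ≤ ((M ∩ P).card : ℤ) + (Q.card : ℤ) - 1

lemma sum_XX {σ : Type*} [DecidableEq σ] (I s : Finset σ) :
    ∑ p ∈ s, XX I p = ((s ∩ I).card : ℤ) := by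
  unfold XX
  rw [Finset.sum_ite_mem]
  simp

lemma sum_one_sub_XX {σ : Type*} [DecidableEq σ] (I s : Finset σ) :
    ∑ p ∈ s, (1 - XX I p) = (s.card : ℤ) - ((s ∩ I).card : ℤ) := by
  rw [Finset.sum_sub_distrib, sum_XX]; simp

lemma trIneq_iff_sat {σ : Type*} [DecidableEq σ] (I : Finset σ) (C : Clause σ) :
    trIneq I C ↔ satClause I C := by
  unfold trIneq satClause
  rw [sum_XX, sum_one_sub_XX]
  have h1 : (C.pos ∩ I).Nonempty ↔ ∃ p ∈ C.pos, p ∈ I := by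
    simp [Finset.Nonempty, Finset.mem_inter]
  have h2 : (C.neg ∩ I ⊂ C.neg) ↔ ∃ q ∈ C.neg, q ∉ I := by
    constructor
    · intro h
      obtain ⟨q, hq, hqn⟩ := Finset.exists_of_ssubset h
      exact ⟨q, hq, fun hI => hqn (Finset.mem_inter.mpr ⟨hq, hI⟩)⟩
    · rintro ⟨q, hq, hqI⟩
      exact Finset.ssubset_iff_of_subset Finset.inter_subset_left |>.mpr
        ⟨q, hq, fun h => hqI (Finset.mem_inter.mp h).2⟩
  rw [← h1, ← h2]
  have hc1 : (C.pos ∩ I).Nonempty ↔ 1 ≤ ((C.pos ∩ I).card : ℤ) := by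
    rw [← Finset.card_pos]; exact_mod_cast Iff.rfl
  have hc2 : (C.neg ∩ I ⊂ C.neg) ↔ ((C.neg ∩ I).card : ℤ) < (C.neg.card : ℤ) := by
    constructor
    · intro h; exact_mod_cast Finset.card_lt_card h
    · intro h
      exact Finset.ssubset_iff_subset_ne.mpr ⟨Finset.inter_subset_left,
        fun he => by rw [he] at h; omega⟩
  rw [hc1, hc2]
  have hle : ((C.pos ∩ I).card : ℤ) ≥ 0 := by positivity
  have hle2 : ((C.neg ∩ I).card : ℤ) ≤ (C.neg.card : ℤ) := by
    exact_mod_cast Finset.card_le_card Finset.inter_subset_left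
  omega

lemma excl_iff {σ : Type*} [DecidableEq σ] (P Q N I : Finset σ) :
    ¬ exclIneq P Q N I ↔ (N ∩ P ⊆ I ∧ I ∩ Q = N ∩ Q) := by
  unfold exclIneq
  rw [sum_XX, sum_XX, sum_one_sub_XX, not_le]
  have e1 : ((N ∩ P ∩ I).card : ℤ) ≤ ((N ∩ P).card : ℤ) := by
    exact_mod_cast Finset.card_le_card Finset.inter_subset_left
  have e2 : ((N ∩ Q ∩ I).card : ℤ) ≤ ((N ∩ Q).card : ℤ) := by
    exact_mod_cast Finset.card_le_card Finset.inter_subset_left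
  have e3 : (0 : ℤ) ≤ ((Q \ N ∩ I).card : ℤ) := by positivity
  have eq : ((Q \ N).card : ℤ) = (Q.card : ℤ) - ((N ∩ Q).card : ℤ) := by
    have := Finset.card_sdiff_add_card_inter Q N
    rw [Finset.inter_comm] at this
    omega
  constructor
  · intro h
    have ha : (N ∩ P ∩ I).card = (N ∩ P).card := by omega
    have hb : (N ∩ Q ∩ I).card = (N ∩ Q).card := by omega
    have hd : (Q \ N ∩ I).card = 0 := by omega
    have ha' : N ∩ P ⊆ I := by
      have := Finset.eq_of_subset_of_card_le (Finset.inter_subset_left (s₁ := N ∩ P) (s₂ := I)) (le_of_eq ha.symm)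
      intro x hx; rw [← this] at hx; exact (Finset.mem_inter.mp hx).2
    have hb' : N ∩ Q ⊆ I := by
      have := Finset.eq_of_subset_of_card_le (Finset.inter_subset_left (s₁ := N ∩ Q) (s₂ := I)) (le_of_eq hb.symm)
      intro x hx; rw [← this] at hx; exact (Finset.mem_inter.mp hx).2
    have hd' : Q \ N ∩ I = ∅ := Finset.card_eq_zero.mp hd
    refine ⟨ha', ?_⟩
    ext x
    simp only [Finset.mem_inter]
    constructor
    · rintro ⟨hxI, hxQ⟩
      by_contra hxN
      have : x ∈ Q \ N ∩ I := by
        simp only [Finset.mem_inter, Finset.mem_sdiff]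
        exact ⟨⟨hxQ, fun h => hxN ⟨h, hxQ⟩⟩, hxI⟩
      rw [hd'] at this; exact absurd this (Finset.notMem_empty x)
    · intro h
      exact ⟨hb' (Finset.mem_inter.mpr ⟨h.1, h.2⟩), h.2⟩
  · rintro ⟨hPsub, hQeq⟩
    have ha : N ∩ P ∩ I = N ∩ P := by
      apply Finset.inter_eq_left.mpr hPsub
    have hb : N ∩ Q ∩ I = N ∩ Q := by
      apply Finset.inter_eq_left.mpr
      intro x hx
      have : x ∈ I ∩ Q := hQeq ▸ hx
      exact (Finset.mem_inter.mp this).1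
    have hd : Q \ N ∩ I = ∅ := by
      ext x
      simp only [Finset.mem_inter, Finset.mem_sdiff, Finset.notMem_empty, iff_false]
      rintro ⟨⟨hxQ, hxN⟩, hxI⟩
      have : x ∈ N ∩ Q := hQeq ▸ (Finset.mem_inter.mpr ⟨hxI, hxQ⟩)
      exact hxN (Finset.mem_inter.mp this).1
    rw [ha, hb, hd]
    simp only [Finset.card_empty, Nat.cast_zero]
    omega

theorem stmt7 {σ : Type*} [DecidableEq σ] [Fintype σ] (P Q : Finset σ)
    (hdisj : Disjoint P Q) (huniv : P ∪ Q = Finset.univ)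
    (A : Finset (Clause σ)) (SS : List (Finset σ))
    -- each element of `SS` satisfies `Tr(A)` and the previously added exclusion
    -- constraints, and has minimum `∑_{p ∈ P} X_p`-value among all such interpretations
    (hstep : ∀ k (hk : k < SS.length),
      (∀ C ∈ A, trIneq (SS.get ⟨k, hk⟩) C) ∧
      (∀ N ∈ SS.take k, exclIneq P Q N (SS.get ⟨k, hk⟩)) ∧
      (∀ I : Finset σ, (∀ C ∈ A, trIneq I C) → (∀ N ∈ SS.take k, exclIneq P Q N I) →
        ∑ p ∈ P, XX (SS.get ⟨k, hk⟩) p ≤ ∑ p ∈ P, XX I p))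
    -- the construction has terminated: no interpretation satisfies `Tr(A)` together
    -- with all the exclusion constraints generated from `SS`
    (hterm : ¬ ∃ I : Finset σ, (∀ C ∈ A, trIneq I C) ∧ ∀ N ∈ SS, exclIneq P Q N I) :
    ∀ M : Finset σ, M ∈ SS ↔
      ((∀ C ∈ A, satClause M C) ∧
        ¬ ∃ M' : Finset σ, (∀ C ∈ A, satClause M' C) ∧
          M' ∩ Q = M ∩ Q ∧ M' ∩ P ⊂ M ∩ P) := by
  intro M
  constructor
  · intro hM
    obtain ⟨⟨k, hk⟩, hMk⟩ := List.mem_iff_get.mp hM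
    obtain ⟨h1, h2, h3⟩ := hstep k hk
    rw [hMk] at h1 h2 h3
    refine ⟨fun C hC => (trIneq_iff_sat M C).mp (h1 C hC), ?_⟩
    rintro ⟨M', hM'sat, hQ, hsub⟩
    have hM'excl : ∀ N ∈ SS.take k, exclIneq P Q N M' := by
      intro N hN
      by_contra hc
      rw [excl_iff] at hc
      obtain ⟨hNP, hNQ⟩ := hc
      apply excl_iff P Q N M |>.mpr ?_ (h2 N hN)
      constructor
      · intro x hx
        have hxP := (Finset.mem_inter.mp hx).2
        have : x ∈ M' ∩ P := Finset.mem_inter.mpr ⟨hNP hx, hxP⟩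
        exact (Finset.mem_inter.mp (hsub.subset this)).1
      · rw [hQ] at hNQ; exact hNQ
    have hle := h3 M' (fun C hC => (trIneq_iff_sat M' C).mpr (hM'sat C hC)) hM'excl
    rw [sum_XX, sum_XX] at hle
    have hcard : (P ∩ M').card < (P ∩ M).card := by
      rw [Finset.inter_comm P M', Finset.inter_comm P M]
      exact Finset.card_lt_card hsub
    omega
  · rintro ⟨hmod, hmin⟩
    by_contra hM
    have hnot : ¬ ∀ N ∈ SS, exclIneq P Q N M :=
      fun h => hterm ⟨M, fun C hC => (trIneq_iff_sat M C).mpr (hmod C hC), h⟩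
    push_neg at hnot
    obtain ⟨N, hN, hNex⟩ := hnot
    rw [excl_iff] at hNex
    obtain ⟨hNP, hNQ⟩ := hNex
    -- N is a model
    obtain ⟨⟨k, hk⟩, hNk⟩ := List.mem_iff_get.mp hN
    have hNmod : ∀ C ∈ A, satClause N C := by
      intro C hC
      have := (hstep k hk).1 C hC
      rw [hNk] at this
      exact (trIneq_iff_sat N C).mp this
    have hNPsub : N ∩ P ⊆ M ∩ P := fun x hx =>
      Finset.mem_inter.mpr ⟨hNP hx, (Finset.mem_inter.mp hx).2⟩
    have hNPeq : N ∩ P = M ∩ P := by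
      by_contra hne
      exact hmin ⟨N, hNmod, hNQ.symm ▸ rfl, Finset.ssubset_iff_subset_ne.mpr ⟨hNPsub, hne⟩⟩
    have : N = M := by
      ext x
      have hx : x ∈ P ∪ Q := huniv ▸ Finset.mem_univ x
      rcases Finset.mem_union.mp hx with hxP | hxQ
      · constructor
        · intro h
          exact (Finset.mem_inter.mp (hNPeq ▸ Finset.mem_inter.mpr ⟨h, hxP⟩)).1
        · intro h
          exact (Finset.mem_inter.mp (hNPeq.symm ▸ Finset.mem_inter.mpr ⟨h, hxP⟩ : x ∈ N ∩ P)).1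
      · constructor
        · intro h
          exact (Finset.mem_inter.mp (hNQ ▸ Finset.mem_inter.mpr ⟨h, hxQ⟩ : x ∈ M ∩ Q)).1
        · intro h
          exact (Finset.mem_inter.mp (hNQ.symm ▸ Finset.mem_inter.mpr ⟨h, hxQ⟩ : x ∈ N ∩ Q)).1
    exact hM (this ▸ hN)
end

section
/- Let A(P,Q) be a propositional theory over minimized symbols P and fixed symbols Q = {q₁,...,qₘ}, and let R = {r₁,...,rₘ} be fresh symbols. Let α be a formula over P only. Then α holds in all minimal models of A w.r.t. P with Q fixed if and only if α holds in all minimal models of A ∧ ⋀ᵢ(rᵢ ↔ ¬qᵢ) w.r.t. P ∪ Q ∪ R with nothing fixed or varied. -/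
/-- `M` is a minimal model of `A` w.r.t. minimized `P` with `Q` fixed. -/
def IsMinModelFixed {σ : Type*} (A : Set σ → Prop) (P Q : Set σ) (M : Set σ) : Prop :=
  A M ∧ ¬ ∃ M', A M' ∧ M' ∩ Q = M ∩ Q ∧ M' ∩ P ⊂ M ∩ P

/-- Pairs `(I, J)` interpret the extended language: `I` interprets the original
symbols and `J` interprets the fresh symbols `R` (one `r_q` per `q ∈ Q`).
The extended theory is `A ∧ ⋀ (r_q ↔ ¬q)`. -/
def ExtTheory {σ : Type*} (A : Set σ → Prop) (Q : Set σ)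
    (N : Set σ × Set {q : σ // q ∈ Q}) : Prop :=
  A N.1 ∧ ∀ q : {q : σ // q ∈ Q}, q ∈ N.2 ↔ (q : σ) ∉ N.1

/-- Minimal model of the extended theory where all symbols `P ∪ Q ∪ R` are
minimized and nothing is fixed or varied: strict componentwise inclusion. -/
def IsMinModelAll {σ : Type*} (A : Set σ → Prop) (Q : Set σ)
    (N : Set σ × Set {q : σ // q ∈ Q}) : Prop :=
  ExtTheory A Q N ∧ ¬ ∃ N' : Set σ × Set {q : σ // q ∈ Q},
    ExtTheory A Q N' ∧ N'.1 ⊆ N.1 ∧ N'.2 ⊆ N.2 ∧ ¬ (N.1 ⊆ N'.1 ∧ N.2 ⊆ N'.2)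

theorem stmt8 {σ : Type*} (P Q : Set σ) (hdisj : Disjoint P Q)
    (huniv : P ∪ Q = Set.univ) (A : Set σ → Prop)
    (α : Set σ → Prop)
    -- `α` is a formula over `P` only
    (hα : ∀ I I' : Set σ, I ∩ P = I' ∩ P → (α I ↔ α I')) :
    (∀ M : Set σ, IsMinModelFixed A P Q M → α M) ↔
    (∀ N : Set σ × Set {q : σ // q ∈ Q}, IsMinModelAll A Q N → α N.1) := by
  have mem_univ' : ∀ x : σ, x ∈ P ∨ x ∈ Q := by
    intro x
    have : x ∈ P ∪ Q := by rw [huniv]; exact Set.mem_univ x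
    exact this
  have key : ∀ I I' : Set σ, I' ∩ Q = I ∩ Q →
      ((I' ⊆ I ∧ ¬ I ⊆ I') ↔ I' ∩ P ⊂ I ∩ P) := by
    intro I I' hQ
    constructor
    · rintro ⟨hsub, hns⟩
      refine ⟨Set.inter_subset_inter_left _ hsub, ?_⟩
      intro hPs
      apply hns
      intro x hx
      rcases mem_univ' x with hp | hq
      · exact (hPs ⟨hx, hp⟩).1
      · have : x ∈ I ∩ Q := ⟨hx, hq⟩
        rw [← hQ] at this
        exact this.1
    · rintro ⟨hsubP, hns⟩
      constructor
      · intro x hx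
        rcases mem_univ' x with hp | hq
        · exact (hsubP ⟨hx, hp⟩).1
        · have : x ∈ I' ∩ Q := ⟨hx, hq⟩
          rw [hQ] at this
          exact this.1
      · intro hsub
        exact hns fun x hx => ⟨hsub hx.1, hx.2⟩
  constructor
  · intro h N hN
    obtain ⟨⟨hA, hJ⟩, hmin⟩ := hN
    apply h N.1
    refine ⟨hA, ?_⟩
    rintro ⟨M', hA', hQ', hP'⟩
    have hsub := (key N.1 M' hQ').2 hP'
    apply hmin
    refine ⟨(M', {q | (q : σ) ∉ M'}), ⟨hA', fun q => Iff.rfl⟩, hsub.1, ?_, ?_⟩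
    · intro q hq
      rw [hJ]
      intro hqI
      have : (q : σ) ∈ M' ∩ Q := by rw [hQ']; exact ⟨hqI, q.2⟩
      exact hq this.1
    · rintro ⟨h1, _⟩
      exact hsub.2 h1
  · intro h M hM
    obtain ⟨hA, hmin⟩ := hM
    have := h (M, {q | (q : σ) ∉ M}) ?_
    · exact (hα M M rfl).mpr this
    refine ⟨⟨hA, fun q => Iff.rfl⟩, ?_⟩
    rintro ⟨⟨I', J'⟩, ⟨hA', hJ'⟩, hsub1, hsub2, hns⟩
    simp only at hsub1 hsub2 hns hJ' hA'
    have hQ' : I' ∩ Q = M ∩ Q := by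
      apply Set.Subset.antisymm
      · exact fun x hx => ⟨hsub1 hx.1, hx.2⟩
      · rintro x ⟨hxM, hxQ⟩
        refine ⟨?_, hxQ⟩
        by_contra hxI'
        have : (⟨x, hxQ⟩ : {q : σ // q ∈ Q}) ∈ J' := (hJ' ⟨x, hxQ⟩).mpr hxI'
        exact hsub2 this hxM
    have hsub2' : ({q : {q : σ // q ∈ Q} | (q : σ) ∉ M}) ⊆ J' := by
      intro q hq
      apply (hJ' q).2
      intro hqI'
      have : (q : σ) ∈ I' ∩ Q := ⟨hqI', q.2⟩
      rw [hQ'] at this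
      exact hq this.1
    have hnsub : ¬ M ⊆ I' := fun hMI => hns ⟨hMI, hsub2'⟩
    exact hmin ⟨I', hA', hQ', (key M I' hQ').1 ⟨hsub1, hnsub⟩⟩
end

section
/- Let A be a propositional theory over P ∪ Q ∪ Z. Let SS = { M∩(P∪Q) : M is a model of A whose restriction to P∪Q is minimal in the order S₁ ⊑ S₂ iff S₁∩Q = S₂∩Q and S₁∩P ⊆ S₂∩P }. Then the set of minimal models of A w.r.t. P with Z varied equals ⋃_{S∈SS} { M : M ⊨ A, M∩(P∪Q) = S }, i.e., the models of A ∧ Fact(S, (P∪Q)∖S) for S ∈ SS, where Fact(F,G) = ⋀_{f∈F} f ∧ ⋀_{g∈G} ¬g. -/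
/-- `S₁ ⊑ S₂`: same `Q`-part, smaller `P`-part. -/
def lePZ {σ : Type*} (P Q : Set σ) (I₁ I₂ : Set σ) : Prop :=
  I₁ ∩ Q = I₂ ∩ Q ∧ I₁ ∩ P ⊆ I₂ ∩ P

def ltPZ {σ : Type*} (P Q : Set σ) (I₁ I₂ : Set σ) : Prop :=
  lePZ P Q I₁ I₂ ∧ ¬ lePZ P Q I₂ I₁

/-- Minimal model of `A` w.r.t. `P` with `Z` varied (`Q` fixed). -/
def IsMinModelVaried {σ : Type*} (A : Set σ → Prop) (P Q : Set σ) (M : Set σ) : Prop :=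
  A M ∧ ¬ ∃ M', A M' ∧ ltPZ P Q M' M

theorem stmt10 {σ : Type*} [Fintype σ] (P Q Z : Set σ)
    (hPQ : Disjoint P Q) (hPZ : Disjoint P Z) (hQZ : Disjoint Q Z)
    (huniv : P ∪ Q ∪ Z = Set.univ)
    (A : Set σ → Prop)
    -- `SS` : the restrictions to `P ∪ Q` of models of `A` whose restriction is
    -- minimal in the order `⊑` among restrictions of models of `A`
    (SS : Set (Set σ))
    (hSS : SS = {S | ∃ N, A N ∧ N ∩ (P ∪ Q) = S ∧
      ∀ N', A N' → ¬ ltPZ P Q (N' ∩ (P ∪ Q)) (N ∩ (P ∪ Q))}) :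
    {M | IsMinModelVaried A P Q M} =
      ⋃ S ∈ SS, {M | A M ∧ (∀ f ∈ S, f ∈ M) ∧ ∀ g ∈ (P ∪ Q) \ S, g ∉ M} := by
  have hP : ∀ X : Set σ, (X ∩ (P ∪ Q)) ∩ P = X ∩ P := by
    intro X; ext x; simp [Set.mem_inter_iff, Set.mem_union]; tauto
  have hQ' : ∀ X : Set σ, (X ∩ (P ∪ Q)) ∩ Q = X ∩ Q := by
    intro X; ext x; simp [Set.mem_inter_iff, Set.mem_union]; tauto
  have hle : ∀ X Y : Set σ, lePZ P Q (X ∩ (P ∪ Q)) (Y ∩ (P ∪ Q)) ↔ lePZ P Q X Y := by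
    intro X Y; unfold lePZ; rw [hP, hP, hQ', hQ']
  have hlt : ∀ X Y : Set σ, ltPZ P Q (X ∩ (P ∪ Q)) (Y ∩ (P ∪ Q)) ↔ ltPZ P Q X Y := by
    intro X Y; unfold ltPZ; rw [hle, hle]
  subst hSS
  ext M
  simp only [Set.mem_setOf_eq, Set.mem_iUnion, IsMinModelVaried]
  constructor
  · rintro ⟨hAM, hmin⟩
    refine ⟨M ∩ (P ∪ Q), ⟨M, hAM, rfl, ?_⟩, hAM, ?_, ?_⟩
    · intro N' hN' hc
      exact hmin ⟨N', hN', (hlt N' M).mp hc⟩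
    · intro f hf; exact hf.1
    · intro g hg hgM; exact hg.2 ⟨hgM, hg.1⟩
  · rintro ⟨S, ⟨N, hAN, hNS, hNmin⟩, hAM, h1, h2⟩
    have hMS : M ∩ (P ∪ Q) = S := by
      ext x
      constructor
      · rintro ⟨hxM, hxPQ⟩
        by_contra hx
        exact h2 x ⟨hxPQ, hx⟩ hxM
      · intro hx
        have hxPQ : x ∈ P ∪ Q := by rw [← hNS] at hx; exact hx.2
        exact ⟨h1 x hx, hxPQ⟩
    refine ⟨hAM, ?_⟩
    rintro ⟨M', hAM', hlt'⟩
    apply hNmin M' hAM'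
    rw [hNS, ← hMS]
    exact (hlt M' M).mpr hlt'
end
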